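/- arXiv:1011.2958 — 3 statements merged into one kernel-verified Lean document; each statement's English description precedes it below -/
import Mathlib

section
/- Let τ be an F°-stopping time taking finitely many values, let P, P₁, P₂ be probability measures on (Ω,F°_T) with P₁ = P₂ = P on F°_τ, let Λ ∈ F°_τ, and let P̄ be the pasting of (P₁,P₂) over (Λ,τ) under P. Then: (a) P̄ = P on F°_τ; (b) for every F°_T-measurable X : Ω → ℝ that is integrable under P₁ and under P₂, X is integrable under P̄ and E^{P̄}[X|F°_τ] = 1_Λ·E^{P₁}[X|F°_τ] + 1_{Λᶜ}·E^{P₂}[X|F°_τ] holds P-a.s.; in particular, if Λ = {E^{P₁}[X|F°_τ] > E^{P₂}[X|F°_τ]}, then E^{P̄}[X|F°_τ] = max(E^{P₁}[X|F°_τ], E^{P₂}[X|F°_τ]) P-a.s. -/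
open MeasureTheory Set Filter

noncomputable section

/-- The canonical path space: continuous paths in `ℝ^d` starting at `0`
(paths indexed by `ℝ`; only the restriction to `[0,T]` is ever used). -/
def PathSpace (d : ℕ) : Type :=
  {ω : C(ℝ, EuclideanSpace ℝ (Fin d)) // ω 0 = 0}

/-- The raw σ-algebra `F°_t = σ(B_s ; 0 ≤ s ≤ t)` generated by the canonical process. -/
def rawSA (d : ℕ) (t : ℝ) : MeasurableSpace (PathSpace d) :=
  ⨆ s ∈ Set.Icc (0 : ℝ) t, MeasurableSpace.comap (fun ω : PathSpace d => ω.1 s) inferInstance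

lemma rawSA_mono {d : ℕ} : Monotone (rawSA d) := by
  intro s t hst
  refine iSup₂_le fun u hu => ?_
  exact le_iSup₂_of_le u ⟨hu.1, hu.2.trans hst⟩ le_rfl

/-- The raw filtration `F°`, as a filtration indexed by `ℝ` (constant after time `T`),
with ambient σ-algebra `F°_T`. -/
def rawFilt (T : ℝ) (d : ℕ) : Filtration ℝ (rawSA d T) where
  seq t := rawSA d (min t T)
  mono' := fun _ _ hst => rawSA_mono (min_le_min hst le_rfl)
  le' := fun t => rawSA_mono (min_le_right t T)

/-- A bounded function. -/
def BddFun {α : Type*} (f : α → ℝ) : Prop := ∃ C : ℝ, ∀ x, |f x| ≤ C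

/-- `Y` is a `P`-essential supremum of the family `F` of random variables. -/
def IsEssSupOf {α : Type*} {m0 : MeasurableSpace α} (P : @Measure α m0) (F : Set (α → ℝ))
    (Y : α → ℝ) : Prop :=
  (∀ f ∈ F, f ≤ᵐ[P] Y) ∧ ∀ Z : α → ℝ, (∀ f ∈ F, f ≤ᵐ[P] Z) → Y ≤ᵐ[P] Z

/-- Two measures agree on the σ-algebra `G`. -/
def EqOnSA {α : Type*} {m0 : MeasurableSpace α} (G : MeasurableSpace α)
    (P Q : @Measure α m0) : Prop :=
  ∀ A : Set α, MeasurableSet[G] A → P A = Q A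

/-- `𝔓(G, P) = {P' ∈ 𝔓 : P' = P on G}`. -/
def MSet {α : Type*} {m0 : MeasurableSpace α} (𝔓 : Set (@Measure α m0))
    (G : MeasurableSpace α) (P : @Measure α m0) : Set (@Measure α m0) :=
  {Q ∈ 𝔓 | EqOnSA G Q P}

/-- The family `{E^{P'}[X | G] : P' ∈ 𝔓(G, P)}` of conditional expectations. -/
def condExpFam {α : Type*} {m0 : MeasurableSpace α} (𝔓 : Set (@Measure α m0))
    (G : MeasurableSpace α) (P : @Measure α m0) (X : α → ℝ) : Set (α → ℝ) :=
  {g | ∃ Q ∈ MSet 𝔓 G P, g = condExp G Q X}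

/-- `X ∈ L¹_𝔓` : `mT`-measurable with `sup_{P ∈ 𝔓} E^P[|X|] < ∞`. -/
def MemL1 {α : Type*} {m0 : MeasurableSpace α} (mT : MeasurableSpace α)
    (𝔓 : Set (@Measure α m0)) (X : α → ℝ) : Prop :=
  Measurable[mT] X ∧ (∀ P ∈ 𝔓, Integrable X P) ∧ ∃ M : ℝ, ∀ P ∈ 𝔓, ∫ ω, |X ω| ∂P ≤ M

/-- `Pb` is the pasting of `(P₁, P₂)` over `(Λ, G)` under `P`, characterized through
integrals of bounded measurable functions. -/
def IsPastingOf {α : Type*} {m0 : MeasurableSpace α} (mT : MeasurableSpace α)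
    (G : MeasurableSpace α) (P P₁ P₂ Pb : @Measure α m0) (Λ : Set α) : Prop :=
  ∀ h : α → ℝ, Measurable[mT] h → BddFun h →
    ∫ x, h x ∂Pb
      = ∫ x, (Λ.indicator (condExp G P₁ h) x + Λᶜ.indicator (condExp G P₂ h) x) ∂P

/-- `𝔓` is stable under `F°`-pasting (along finite-valued `F°`-stopping times). -/
def StableUnderPasting (T : ℝ) (d : ℕ)
    (𝔓 : Set (@Measure (PathSpace d) (rawSA d T))) : Prop :=
  ∀ P ∈ 𝔓, ∀ τ : PathSpace d → ℝ, ∀ hτ : IsStoppingTime (rawFilt T d) (fun ω => (τ ω : WithTop ℝ)),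
    (Set.range τ).Finite → (∀ ω, τ ω ∈ Set.Icc (0 : ℝ) T) →
    ∀ Λ : Set (PathSpace d), MeasurableSet[hτ.measurableSpace] Λ →
    ∀ P₁ ∈ MSet 𝔓 hτ.measurableSpace P, ∀ P₂ ∈ MSet 𝔓 hτ.measurableSpace P,
    ∀ Pb : @Measure (PathSpace d) (rawSA d T),
      IsPastingOf (rawSA d T) hτ.measurableSpace P P₁ P₂ Pb Λ → Pb ∈ 𝔓

end

/-! Testing the pasting identity against indicators `1_A`, and using that `E^{Pᵢ}[·|G]`
integrates against `P` over `G`-sets exactly as the integrand does against `Pᵢ`, shows that the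
pasting is the measure `P₁|_Λ + P₂|_Λᶜ`. Both claims are then read off this formula: on `G` it
agrees with `P` because `P₁` and `P₂` do, and `1_Λ E^{P₁}[X|G] + 1_Λᶜ E^{P₂}[X|G]` has the
defining set integrals of its conditional expectation. -/

section EqOnSA

variable {α : Type*} {G m0 : MeasurableSpace α} {P Q : Measure α}

lemma EqOnSA.symm (h : EqOnSA G P Q) : EqOnSA G Q P :=
  fun A hA => (h A hA).symm

lemma EqOnSA.trim_eq (hG : G ≤ m0) (h : EqOnSA G P Q) : P.trim hG = Q.trim hG :=
  @Measure.ext _ G _ _ fun A hA => by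
    rw [trim_measurableSet_eq hG hA, trim_measurableSet_eq hG hA, h A hA]

lemma EqOnSA.setIntegral_eq (hG : G ≤ m0) (h : EqOnSA G P Q) {f : α → ℝ}
    (hf : StronglyMeasurable[G] f) {s : Set α} (hs : MeasurableSet[G] s) :
    ∫ x in s, f x ∂P = ∫ x in s, f x ∂Q := by
  rw [setIntegral_trim hG hf hs, setIntegral_trim hG hf hs, h.trim_eq hG]

lemma EqOnSA.integrable (hG : G ≤ m0) (h : EqOnSA G P Q) {f : α → ℝ}
    (hf : StronglyMeasurable[G] f) (hfi : Integrable f P) : Integrable f Q := by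
  have hfi' := hfi.trim hG hf
  rw [h.trim_eq hG] at hfi'
  exact integrable_of_integrable_trim hG hfi'

lemma EqOnSA.ae_eq (hG : G ≤ m0) (h : EqOnSA G P Q) {f g : α → ℝ}
    (hf : StronglyMeasurable[G] f) (hg : StronglyMeasurable[G] g) (hfg : f =ᵐ[P] g) :
    f =ᵐ[Q] g := by
  rw [← StronglyMeasurable.ae_eq_trim_iff hG hf hg, ← h.trim_eq hG,
    StronglyMeasurable.ae_eq_trim_iff hG hf hg]
  exact hfg

lemma EqOnSA.setIntegral_condExp (hG : G ≤ m0) (h : EqOnSA G Q P) [IsFiniteMeasure Q]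
    {f : α → ℝ} (hf : Integrable f Q) {s : Set α} (hs : MeasurableSet[G] s) :
    ∫ x in s, (Q[f|G]) x ∂P = ∫ x in s, f x ∂Q := by
  rw [← h.setIntegral_eq hG stronglyMeasurable_condExp hs,
    MeasureTheory.setIntegral_condExp hG hf hs]

end EqOnSA

section Pasting

variable {α : Type*} {G m0 : MeasurableSpace α} {P P₁ P₂ Pb : Measure α} {Λ : Set α}

lemma IsPastingOf.integral_eq (hG : G ≤ m0) (h₁ : EqOnSA G P₁ P) (h₂ : EqOnSA G P₂ P)
    (hΛ : MeasurableSet[G] Λ) [IsFiniteMeasure P₁] [IsFiniteMeasure P₂]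
    (hpaste : IsPastingOf m0 G P P₁ P₂ Pb Λ) {f : α → ℝ} (hfm : Measurable f) (hfb : BddFun f)
    (hf₁ : Integrable f P₁) (hf₂ : Integrable f P₂) :
    ∫ x, f x ∂Pb = ∫ x in Λ, f x ∂P₁ + ∫ x in Λᶜ, f x ∂P₂ := by
  have hE₁ : Integrable (P₁[f|G]) P :=
    h₁.integrable hG stronglyMeasurable_condExp integrable_condExp
  have hE₂ : Integrable (P₂[f|G]) P :=
    h₂.integrable hG stronglyMeasurable_condExp integrable_condExp
  rw [hpaste f hfm hfb, integral_add (hE₁.indicator (hG _ hΛ)) (hE₂.indicator (hG _ hΛ.compl)),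
    integral_indicator (hG _ hΛ), integral_indicator (hG _ hΛ.compl),
    h₁.setIntegral_condExp hG hf₁ hΛ, h₂.setIntegral_condExp hG hf₂ hΛ.compl]

lemma IsPastingOf.eq_add_restrict (hG : G ≤ m0) (h₁ : EqOnSA G P₁ P) (h₂ : EqOnSA G P₂ P)
    (hΛ : MeasurableSet[G] Λ) [IsFiniteMeasure P₁] [IsFiniteMeasure P₂] [IsFiniteMeasure Pb]
    (hpaste : IsPastingOf m0 G P P₁ P₂ Pb Λ) :
    Pb = P₁.restrict Λ + P₂.restrict Λᶜ := by
  ext A hA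
  have hbdd : BddFun (A.indicator fun _ => (1 : ℝ)) :=
    ⟨1, fun x => by by_cases hx : x ∈ A <;> simp [hx]⟩
  have key := hpaste.integral_eq hG h₁ h₂ hΛ (measurable_const.indicator hA) hbdd
    ((integrable_const 1).indicator hA) ((integrable_const 1).indicator hA)
  simp only [integral_indicator_const _ hA, smul_eq_mul, mul_one] at key
  rw [← measureReal_add_apply] at key
  exact (measureReal_eq_measureReal_iff).mp key

lemma eqOnSA_add_restrict (hG : G ≤ m0) (h₁ : EqOnSA G P₁ P) (h₂ : EqOnSA G P₂ P)
    (hΛ : MeasurableSet[G] Λ) : EqOnSA G (P₁.restrict Λ + P₂.restrict Λᶜ) P := by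
  intro A hA
  rw [Measure.add_apply, Measure.restrict_apply (hG _ hA), Measure.restrict_apply (hG _ hA),
    h₁ _ (hA.inter hΛ), h₂ _ (hA.inter hΛ.compl), ← sdiff_eq, measure_inter_add_sdiff _ (hG _ hΛ)]

lemma condExp_add_restrict_ae_eq (hG : G ≤ m0) (h₁ : EqOnSA G P₁ P) (h₂ : EqOnSA G P₂ P)
    (hΛ : MeasurableSet[G] Λ) [IsFiniteMeasure P₁] [IsFiniteMeasure P₂] {X : α → ℝ}
    (hX₁ : Integrable X P₁) (hX₂ : Integrable X P₂) :
    (P₁.restrict Λ + P₂.restrict Λᶜ)[X|G]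
      =ᵐ[P] fun ω => Λ.indicator (P₁[X|G]) ω + Λᶜ.indicator (P₂[X|G]) ω := by
  set μ := P₁.restrict Λ + P₂.restrict Λᶜ
  set g := fun ω => Λ.indicator (P₁[X|G]) ω + Λᶜ.indicator (P₂[X|G]) ω
  have hμ : EqOnSA G μ P := eqOnSA_add_restrict hG h₁ h₂ hΛ
  have hE₁ : Integrable (P₁[X|G]) P :=
    h₁.integrable hG stronglyMeasurable_condExp integrable_condExp
  have hE₂ : Integrable (P₂[X|G]) P :=
    h₂.integrable hG stronglyMeasurable_condExp integrable_condExp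
  have hg : StronglyMeasurable[G] g :=
    (stronglyMeasurable_condExp.indicator hΛ).add (stronglyMeasurable_condExp.indicator hΛ.compl)
  have hgμ : Integrable g μ :=
    hμ.symm.integrable hG hg ((hE₁.indicator (hG _ hΛ)).add (hE₂.indicator (hG _ hΛ.compl)))
  have hset : ∀ s, MeasurableSet[G] s → ∫ x in s, g x ∂μ = ∫ x in s, X x ∂μ := by
    intro s hs
    calc ∫ x in s, g x ∂μ = ∫ x in s, g x ∂P := hμ.setIntegral_eq hG hg hs
      _ = ∫ x in s ∩ Λ, P₁[X|G] x ∂P + ∫ x in s ∩ Λᶜ, P₂[X|G] x ∂P := by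
        rw [integral_add ((hE₁.indicator (hG _ hΛ)).restrict)
          ((hE₂.indicator (hG _ hΛ.compl)).restrict),
          setIntegral_indicator (hG _ hΛ), setIntegral_indicator (hG _ hΛ.compl)]
      _ = ∫ x in s ∩ Λ, X x ∂P₁ + ∫ x in s ∩ Λᶜ, X x ∂P₂ := by
        rw [h₁.setIntegral_condExp hG hX₁ (hs.inter hΛ),
          h₂.setIntegral_condExp hG hX₂ (hs.inter hΛ.compl)]
      _ = ∫ x in s, X x ∂μ := by
        rw [Measure.restrict_add, integral_add_measure hX₁.restrict.restrict hX₂.restrict.restrict,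
          Measure.restrict_restrict (hG _ hs), Measure.restrict_restrict (hG _ hs)]
  have hgμ_eq : g =ᵐ[μ] μ[X|G] :=
    ae_eq_condExp_of_forall_setIntegral_eq hG
      (integrable_add_measure.2 ⟨hX₁.restrict, hX₂.restrict⟩)
      (fun s _ _ => hgμ.integrableOn) (fun s hs _ => hset s hs) hg.aestronglyMeasurable
  exact (hμ.ae_eq hG hg stronglyMeasurable_condExp hgμ_eq).symm

end Pasting

lemma indicator_lt_add_indicator_compl_eq_max {α : Type*} (f g : α → ℝ) :
    (fun x => {y | g y < f y}.indicator f x + {y | g y < f y}ᶜ.indicator g x)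
      = fun x => max (f x) (g x) := by
  funext x
  by_cases h : g x < f x
  · simp [h, max_eq_left h.le]
  · simp [h, max_eq_right (not_lt.1 h)]

theorem statement0_general {T : ℝ} {d : ℕ}
    (τ : PathSpace d → ℝ) (hτ : IsStoppingTime (rawFilt T d) (fun ω => (τ ω : WithTop ℝ)))
    (P P₁ P₂ Pb : @Measure (PathSpace d) (rawSA d T))
    (hP₁ : IsProbabilityMeasure P₁)
    (hP₂ : IsProbabilityMeasure P₂) (hPb : IsProbabilityMeasure Pb)
    (h₁ : EqOnSA hτ.measurableSpace P₁ P) (h₂ : EqOnSA hτ.measurableSpace P₂ P)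
    (Λ : Set (PathSpace d)) (hΛ : MeasurableSet[hτ.measurableSpace] Λ)
    (hpaste : IsPastingOf (rawSA d T) hτ.measurableSpace P P₁ P₂ Pb Λ) :
    -- (a) `P̄ = P` on `F°_τ`
    EqOnSA hτ.measurableSpace Pb P ∧
    -- (b) conditional expectations under the pasting
    (∀ X : PathSpace d → ℝ, Measurable[rawSA d T] X →
      Integrable X P₁ → Integrable X P₂ →
      Integrable X Pb ∧
      (condExp hτ.measurableSpace Pb X
        =ᵐ[P] fun ω => Λ.indicator (condExp hτ.measurableSpace P₁ X) ω
          + Λᶜ.indicator (condExp hτ.measurableSpace P₂ X) ω) ∧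
      -- in particular, for the maximizing choice of `Λ`:
      (Λ = {ω | condExp hτ.measurableSpace P₂ X ω < condExp hτ.measurableSpace P₁ X ω} →
        condExp hτ.measurableSpace Pb X
          =ᵐ[P] fun ω => max (condExp hτ.measurableSpace P₁ X ω)
            (condExp hτ.measurableSpace P₂ X ω))) := by
  have hG := hτ.measurableSpace_le
  obtain rfl : Pb = P₁.restrict Λ + P₂.restrict Λᶜ := hpaste.eq_add_restrict hG h₁ h₂ hΛ
  refine ⟨eqOnSA_add_restrict hG h₁ h₂ hΛ, fun X _ hX₁ hX₂ => ?_⟩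
  have hcond := condExp_add_restrict_ae_eq hG h₁ h₂ hΛ hX₁ hX₂
  refine ⟨integrable_add_measure.2 ⟨hX₁.restrict, hX₂.restrict⟩, hcond, fun hΛX => ?_⟩
  refine hcond.trans (EventuallyEq.of_eq ?_)
  subst hΛX
  exact indicator_lt_add_indicator_compl_eq_max _ _

/-- properties of the pasting measure. -/
theorem statement0 {T : ℝ} (hT : 0 < T) {d : ℕ}
    (τ : PathSpace d → ℝ) (hτ : IsStoppingTime (rawFilt T d) (fun ω => (τ ω : WithTop ℝ)))
    (hτfin : (Set.range τ).Finite) (hτmem : ∀ ω, τ ω ∈ Set.Icc (0 : ℝ) T)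
    (P P₁ P₂ Pb : @Measure (PathSpace d) (rawSA d T))
    (hP : IsProbabilityMeasure P) (hP₁ : IsProbabilityMeasure P₁)
    (hP₂ : IsProbabilityMeasure P₂) (hPb : IsProbabilityMeasure Pb)
    (h₁ : EqOnSA hτ.measurableSpace P₁ P) (h₂ : EqOnSA hτ.measurableSpace P₂ P)
    (Λ : Set (PathSpace d)) (hΛ : MeasurableSet[hτ.measurableSpace] Λ)
    (hpaste : IsPastingOf (rawSA d T) hτ.measurableSpace P P₁ P₂ Pb Λ) :
    -- (a) `P̄ = P` on `F°_τ`
    EqOnSA hτ.measurableSpace Pb P ∧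
    -- (b) conditional expectations under the pasting
    (∀ X : PathSpace d → ℝ, Measurable[rawSA d T] X →
      Integrable X P₁ → Integrable X P₂ →
      Integrable X Pb ∧
      (condExp hτ.measurableSpace Pb X
        =ᵐ[P] fun ω => Λ.indicator (condExp hτ.measurableSpace P₁ X) ω
          + Λᶜ.indicator (condExp hτ.measurableSpace P₂ X) ω) ∧
      -- in particular, for the maximizing choice of `Λ`:
      (Λ = {ω | condExp hτ.measurableSpace P₂ X ω < condExp hτ.measurableSpace P₁ X ω} →
        condExp hτ.measurableSpace Pb X
          =ᵐ[P] fun ω => max (condExp hτ.measurableSpace P₁ X ω)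
            (condExp hτ.measurableSpace P₂ X ω))) :=
  statement0_general τ hτ P P₁ P₂ Pb hP₁ hP₂ hPb h₁ h₂ Λ hΛ hpaste
end

section
/- Let P be a probability measure on (Ω,F°_T) satisfying the augmentation hypothesis, and let τ be an F̂-stopping time taking at most countably many values. Then: (a) there exists an F°-stopping time τ° with τ = τ° P-a.s.; (b) for every F°-stopping time τ° with τ = τ° P-a.s., the σ-algebras F̂_τ and F°_{τ°} differ only by P-nullsets, i.e., for every A ∈ F̂_τ there exists A° ∈ F°_{τ°} with P(A △ A°) = 0, and for every Λ ∈ F°_{τ°} there exists Λ' ∈ F̂_τ with P(Λ △ Λ') = 0. -/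
open MeasureTheory Set Filter

noncomputable section

/-- The right-continuous filtration `F⁺`: `F⁺_t = ∩_{s ∈ (t,T]} F°_s` for `t < T`
and `F⁺_T = F°_T` (realized as `⨅_{s > t} F°_{min s T}`). -/
def FplusSA (T : ℝ) (d : ℕ) (t : ℝ) : MeasurableSpace (PathSpace d) :=
  ⨅ s ∈ Set.Ioi t, rawSA d (min s T)

lemma FplusSA_mono (T : ℝ) (d : ℕ) : Monotone (FplusSA T d) := by
  intro s t hst
  exact le_iInf₂ fun u hu => iInf₂_le u (lt_of_le_of_lt hst hu)

lemma FplusSA_le (T : ℝ) (d : ℕ) (t : ℝ) : FplusSA T d t ≤ rawSA d T := by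
  have h1 : (max t T + 1) ∈ Set.Ioi t := by
    simp only [Set.mem_Ioi]
    have := le_max_left t T
    linarith
  have h2 : min (max t T + 1) T = T := by
    have := le_max_right t T
    exact min_eq_right (by linarith)
  have := iInf₂_le (f := fun (s : ℝ) (_ : s ∈ Set.Ioi t) => rawSA d (min s T)) (max t T + 1) h1
  rwa [h2] at this

/-- The collection of `𝔓`-polar sets. -/
def IsPolar {α : Type*} {m0 : MeasurableSpace α} (𝔓 : Set (@Measure α m0)) (N : Set α) : Prop :=
  ∀ P ∈ 𝔓, P N = 0

/-- The augmented σ-algebra `F̂_t = σ(F⁺_t ∪ N^𝔓)`. -/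
def FhatSA (T : ℝ) (d : ℕ) {m0 : MeasurableSpace (PathSpace d)}
    (𝔓 : Set (@Measure (PathSpace d) m0)) (t : ℝ) : MeasurableSpace (PathSpace d) :=
  FplusSA T d t ⊔ MeasurableSpace.generateFrom {N | IsPolar 𝔓 N}

/-- The filtration `F̂`, with an ambient σ-algebra `m0` containing `F°_T` and the polar sets
(the measures of `𝔓` being understood as (uniquely) extended to `m0`). -/
def FhatFilt (T : ℝ) (d : ℕ) {m0 : MeasurableSpace (PathSpace d)}
    (𝔓 : Set (@Measure (PathSpace d) m0))
    (hB : rawSA d T ≤ m0)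
    (hN : MeasurableSpace.generateFrom {N | IsPolar 𝔓 N} ≤ m0) :
    Filtration ℝ m0 where
  seq t := FhatSA T d 𝔓 t
  mono' := fun _ _ hst => sup_le_sup_right (FplusSA_mono T d hst) _
  le' := fun t => sup_le ((FplusSA_le T d t).trans hB) hN

/-- The augmentation hypothesis for `P`: every set in `F̂_t` agrees with a set in `F°_t`
up to a `P`-null set, for every `t ∈ [0,T]`. -/
def AugHyp (T : ℝ) (d : ℕ) {m0 : MeasurableSpace (PathSpace d)}
    (𝔓 : Set (@Measure (PathSpace d) m0)) (P : @Measure (PathSpace d) m0) : Prop :=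
  ∀ t ∈ Set.Icc (0 : ℝ) T, ∀ A : Set (PathSpace d), MeasurableSet[FhatSA T d 𝔓 t] A →
    ∃ A' : Set (PathSpace d), MeasurableSet[rawSA d t] A' ∧ P (symmDiff A A') = 0

/-- Stability of `𝔓` under `F°`-pasting, for measures given on the ambient σ-algebra `m0`:
the pasting, which is a measure on `F°_T`, coincides on `F°_T` with an element of `𝔓`. -/
def StableUnderPastingE (T : ℝ) (d : ℕ) {m0 : MeasurableSpace (PathSpace d)}
    (𝔓 : Set (@Measure (PathSpace d) m0)) : Prop :=
  ∀ P ∈ 𝔓, ∀ τ : PathSpace d → ℝ, ∀ hτ : IsStoppingTime (rawFilt T d) (fun ω => (τ ω : WithTop ℝ)),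
    (Set.range τ).Finite → (∀ ω, τ ω ∈ Set.Icc (0 : ℝ) T) →
    ∀ Λ : Set (PathSpace d), MeasurableSet[hτ.measurableSpace] Λ →
    ∀ P₁ ∈ MSet 𝔓 hτ.measurableSpace P, ∀ P₂ ∈ MSet 𝔓 hτ.measurableSpace P,
    ∃ Q ∈ 𝔓, ∀ h : PathSpace d → ℝ, Measurable[rawSA d T] h → BddFun h →
      ∫ x, h x ∂Q
        = ∫ x, (Λ.indicator (condExp hτ.measurableSpace P₁ h) x
            + Λᶜ.indicator (condExp hτ.measurableSpace P₂ h) x) ∂P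

/-- A real path which is càdlàg on `[0,T]`: right-continuous on `[0,T)` and with finite
left limits on `(0,T]`. -/
def IsCadlagPath (T : ℝ) (f : ℝ → ℝ) : Prop :=
  (∀ t ∈ Set.Ico (0 : ℝ) T, Tendsto f (nhdsWithin t (Set.Ioi t)) (nhds (f t))) ∧
  (∀ t ∈ Set.Ioc (0 : ℝ) T, ∃ L : ℝ, Tendsto f (nhdsWithin t (Set.Ico 0 t)) (nhds L))

end

/-!
Choose `F°_t`-measurable versions `A_t` of the events `{τ = t}`, `t` in the countable range of `τ`,
and let `τ°(ω)` be the least `t` with `ω ∈ A_t` (a constant if there is none). Each event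
`{τ° = t} = A_t \ ⋃_{s < t} A_s` is in `F°_t`, and off the countable union of the null sets
`A_t ∆ {τ = t}` the least such `t` is `τ(ω)`. For the stopping σ-algebras, a set `A ∈ F̂_τ` is the
countable union of the pieces `A ∩ {τ = t} ∈ F̂_t`; replacing each piece by an `F°_t`-version `D_t`
and `{τ = t}` by `{τ° = t}` gives `⋃_t D_t ∩ {τ° = t} ∈ F°_{τ°}`, which agrees with `A` up to a
null set. The converse inclusion is the same argument, with `F°_t ⊆ F̂_t` in place of augmentation.
-/

open scoped symmDiff

namespace MeasureTheory

variable {Ω ι : Type*}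

def LEUpToNull {m : MeasurableSpace Ω} (μ : Measure Ω) (m₁ m₂ : MeasurableSpace Ω) : Prop :=
  ∀ A, MeasurableSet[m₁] A → ∃ A', MeasurableSet[m₂] A' ∧ μ (A ∆ A') = 0

lemma LEUpToNull.of_le {m : MeasurableSpace Ω} {μ : Measure Ω} {m₁ m₂ : MeasurableSpace Ω}
    (h : m₁ ≤ m₂) : LEUpToNull μ m₁ m₂ :=
  fun A hA => ⟨A, h A hA, by simp⟩

section StoppingTime

variable [LinearOrder ι] {mf : MeasurableSpace Ω} {f : Filtration ι mf} {τ : Ω → ι}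

lemma IsStoppingTime.measurableSet_inter_coe_eq_iff
    (hτ : IsStoppingTime f fun ω => (τ ω : WithTop ι)) (s : Set Ω) (t : ι) :
    MeasurableSet[hτ.measurableSpace] (s ∩ {ω | τ ω = t}) ↔
      MeasurableSet[f t] (s ∩ {ω | τ ω = t}) := by
  simpa using hτ.measurableSet_inter_eq_iff s t

variable [TopologicalSpace ι] [OrderTopology ι] [FirstCountableTopology ι]

lemma IsStoppingTime.measurableSet_coe_eq
    (hτ : IsStoppingTime f fun ω => (τ ω : WithTop ι)) (t : ι) :
    MeasurableSet[f t] {ω | τ ω = t} := by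
  simpa using hτ.measurableSet_eq t

lemma IsStoppingTime.measurableSet_coe_eq'
    (hτ : IsStoppingTime f fun ω => (τ ω : WithTop ι)) (t : ι) :
    MeasurableSet[hτ.measurableSpace] {ω | τ ω = t} := by
  simpa using (hτ.measurableSet_inter_coe_eq_iff univ t).2 (by simpa using hτ.measurableSet_coe_eq t)

end StoppingTime

section FirstIndex

variable [LinearOrder ι] {S : Set ι} {A : ι → Set Ω} {c t : ι} {ω : Ω}

open Classical in
noncomputable def firstIndex (S : Set ι) (A : ι → Set Ω) (c : ι) (ω : Ω) : ι :=
  if h : ∃ t, IsLeast {s ∈ S | ω ∈ A s} t then h.choose else c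

lemma firstIndex_eq_of_isLeast (h : IsLeast {s ∈ S | ω ∈ A s} t) : firstIndex S A c ω = t := by
  have hex : ∃ t, IsLeast {s ∈ S | ω ∈ A s} t := ⟨t, h⟩
  rw [firstIndex, dif_pos hex]
  exact hex.choose_spec.unique h

lemma firstIndex_eq_default (h : ¬∃ t, IsLeast {s ∈ S | ω ∈ A s} t) : firstIndex S A c ω = c := by
  rw [firstIndex, dif_neg h]

lemma firstIndex_mem_insert (S : Set ι) (A : ι → Set Ω) (c : ι) (ω : Ω) :
    firstIndex S A c ω ∈ insert c S := by
  by_cases h : ∃ t, IsLeast {s ∈ S | ω ∈ A s} t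
  · obtain ⟨t, ht⟩ := h
    exact (firstIndex_eq_of_isLeast ht) ▸ mem_insert_of_mem c ht.1.1
  · exact (firstIndex_eq_default h) ▸ mem_insert c S

lemma setOf_isLeast_eq_diff (ht : t ∈ S) :
    {ω | IsLeast {s ∈ S | ω ∈ A s} t} = A t \ ⋃ s ∈ S ∩ Iio t, A s := by
  ext ω
  simp only [IsLeast, lowerBounds, mem_ofPred_eq, Set.mem_sdiff, mem_iUnion, mem_inter_iff, mem_Iio,
    exists_prop, not_exists, not_and]
  constructor
  · rintro ⟨⟨-, hωt⟩, hleast⟩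
    exact ⟨hωt, fun s ⟨hs, hst⟩ hωs => (hleast ⟨hs, hωs⟩).not_gt hst⟩
  · rintro ⟨hωt, hnot⟩
    exact ⟨⟨ht, hωt⟩, fun s ⟨hs, hωs⟩ => not_lt.1 fun hst => hnot s ⟨hs, hst⟩ hωs⟩

variable {mf : MeasurableSpace Ω} {f : Filtration ι mf}

lemma firstIndex_le (hc : ∀ t ∈ S, t ≤ c) (ω : Ω) : firstIndex S A c ω ≤ c := by
  rcases firstIndex_mem_insert S A c ω with h | h
  · exact h.le
  · exact hc _ h

lemma isStoppingTime_firstIndex (hS : S.Countable) (hA : ∀ t ∈ S, MeasurableSet[f t] (A t))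
    (hc : ∀ t ∈ S, t ≤ c) : IsStoppingTime f fun ω => ((firstIndex S A c ω : ι) : WithTop ι) := by
  intro i
  simp only [WithTop.coe_le_coe]
  by_cases hci : c ≤ i
  · simp [(firstIndex_le hc _).trans hci]
  have hset : {ω | firstIndex S A c ω ≤ i} = ⋃ t ∈ S ∩ Iic i, {ω | IsLeast {s ∈ S | ω ∈ A s} t} := by
    ext ω
    simp only [mem_ofPred_eq, mem_iUnion, mem_inter_iff, mem_Iic, exists_prop]
    by_cases h : ∃ t, IsLeast {s ∈ S | ω ∈ A s} t
    · obtain ⟨t, ht⟩ := h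
      rw [firstIndex_eq_of_isLeast ht]
      exact ⟨fun hti => ⟨t, ⟨ht.1.1, hti⟩, ht⟩, fun ⟨t', ⟨_, ht'i⟩, ht'⟩ => ht.unique ht' ▸ ht'i⟩
    · rw [firstIndex_eq_default h]
      exact ⟨fun hle => absurd hle hci, fun ⟨t, _, ht⟩ => absurd ⟨t, ht⟩ h⟩
  rw [hset]
  refine MeasurableSet.biUnion (hS.mono inter_subset_left) fun t ⟨htS, hti⟩ => f.mono hti _ ?_
  rw [setOf_isLeast_eq_diff htS]
  exact (hA t htS).diff (MeasurableSet.biUnion (hS.mono inter_subset_left)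
    fun s ⟨hs, hst⟩ => f.mono (le_of_lt hst) _ (hA s hs))

variable {m : MeasurableSpace Ω} {μ : Measure Ω}

lemma ae_eq_firstIndex {τ : Ω → ι} (hS : S.Countable) (hτS : ∀ ω, τ ω ∈ S)
    (hA : ∀ t ∈ S, μ ({ω | τ ω = t} ∆ A t) = 0) : ∀ᵐ ω ∂μ, τ ω = firstIndex S A c ω := by
  have hA' : ∀ᵐ ω ∂μ, ∀ t ∈ S, (τ ω = t ↔ ω ∈ A t) :=
    (ae_ball_iff hS).2 fun t ht => eventuallyEq_set.1 (measure_symmDiff_eq_zero_iff.1 (hA t ht))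
  filter_upwards [hA'] with ω hω
  refine (firstIndex_eq_of_isLeast ⟨⟨hτS ω, (hω _ (hτS ω)).1 rfl⟩, fun s ⟨hs, hωs⟩ => ?_⟩).symm
  exact ((hω s hs).2 hωs).le

end FirstIndex

section AugmentedStoppingTime

variable [LinearOrder ι] {mf mg : MeasurableSpace Ω} {f : Filtration ι mf} {g : Filtration ι mg}
  {m : MeasurableSpace Ω} {μ : Measure Ω}

theorem exists_isStoppingTime_ae_eq_of_countable_range {τ : Ω → ι}
    (hτ : IsStoppingTime g fun ω => (τ ω : WithTop ι)) (hτc : (range τ).Countable)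
    (haug : ∀ t ∈ range τ, LEUpToNull μ (g t) (f t)) {c : ι} (hc : ∀ ω, τ ω ≤ c) :
    ∃ σ : Ω → ι, IsStoppingTime f (fun ω => (σ ω : WithTop ι)) ∧
      (∀ ω, σ ω ∈ insert c (range τ)) ∧ ∀ᵐ ω ∂μ, τ ω = σ ω := by
  have hτeq : ∀ t, MeasurableSet[g t] {ω | τ ω = t} := fun t => by
    have hτc' : (range fun ω => (τ ω : WithTop ι)).Countable := by
      rw [show (fun ω => (τ ω : WithTop ι)) = (↑) ∘ τ from rfl, range_comp]
      exact hτc.image _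
    simpa using hτ.measurableSet_eq_of_countable_range hτc' t
  choose! A hAf hAμ using fun t ht => haug t ht _ (hτeq t)
  exact ⟨firstIndex (range τ) A c, isStoppingTime_firstIndex hτc hAf (forall_mem_range.2 hc),
    firstIndex_mem_insert _ _ _, ae_eq_firstIndex hτc mem_range_self hAμ⟩

variable [TopologicalSpace ι] [OrderTopology ι] [FirstCountableTopology ι]

theorem IsStoppingTime.leUpToNull_measurableSpace {τ σ : Ω → ι} {S : Set ι} (hS : S.Countable)
    (hτ : IsStoppingTime f fun ω => (τ ω : WithTop ι))
    (hσ : IsStoppingTime g fun ω => (σ ω : WithTop ι))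
    (hτS : ∀ᵐ ω ∂μ, τ ω ∈ S) (hτσ : ∀ᵐ ω ∂μ, τ ω = σ ω)
    (haug : ∀ t ∈ S, LEUpToNull μ (f t) (g t)) :
    LEUpToNull μ hτ.measurableSpace hσ.measurableSpace := by
  intro A hA
  choose! D hDg hDμ using fun t ht => haug t ht (A ∩ {ω | τ ω = t})
    ((hτ.measurableSet_inter_coe_eq_iff A t).1 (hA.inter (hτ.measurableSet_coe_eq' t)))
  refine ⟨⋃ t ∈ S, D t ∩ {ω | σ ω = t}, MeasurableSet.biUnion hS fun t ht =>
    (hσ.measurableSet_inter_coe_eq_iff _ t).2 ((hDg t ht).inter (hσ.measurableSet_coe_eq t)), ?_⟩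
  have hD : ∀ᵐ ω ∂μ, ∀ t ∈ S, (ω ∈ A ∩ {ω | τ ω = t} ↔ ω ∈ D t) :=
    (ae_ball_iff hS).2 fun t ht => eventuallyEq_set.1 (measure_symmDiff_eq_zero_iff.1 (hDμ t ht))
  refine measure_symmDiff_eq_zero_iff.2 (eventuallyEq_set.2 ?_)
  filter_upwards [hτS, hτσ, hD] with ω hωS hωσ hωD
  simp only [mem_iUnion₂, mem_inter_iff, mem_ofPred_eq, exists_prop]
  constructor
  · exact fun hωA => ⟨τ ω, hωS, (hωD _ hωS).1 ⟨hωA, rfl⟩, hωσ.symm⟩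
  · exact fun ⟨t, ht, hωt, _⟩ => ((hωD t ht).2 hωt).1

end AugmentedStoppingTime

end MeasureTheory

lemma rawFilt_le_FhatFilt {T : ℝ} {d : ℕ} {m0 : MeasurableSpace (PathSpace d)}
    {𝔓 : Set (@Measure (PathSpace d) m0)} {hB : rawSA d T ≤ m0}
    {hN : MeasurableSpace.generateFrom {N | IsPolar 𝔓 N} ≤ m0} (t : ℝ) :
    rawFilt T d t ≤ FhatFilt T d 𝔓 hB hN t :=
  calc rawFilt T d t = rawSA d (min t T) := rfl
    _ ≤ FplusSA T d t := le_iInf₂ fun _ hs => rawSA_mono (min_le_min_right T (le_of_lt hs))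
    _ ≤ FhatFilt T d 𝔓 hB hN t := le_sup_left

lemma AugHyp.leUpToNull {T : ℝ} {d : ℕ} {m0 : MeasurableSpace (PathSpace d)}
    {𝔓 : Set (@Measure (PathSpace d) m0)} {hB : rawSA d T ≤ m0}
    {hN : MeasurableSpace.generateFrom {N | IsPolar 𝔓 N} ≤ m0} {P : @Measure (PathSpace d) m0}
    (hAug : AugHyp T d 𝔓 P) {t : ℝ} (ht : t ∈ Icc 0 T) :
    LEUpToNull P (FhatFilt T d 𝔓 hB hN t) (rawFilt T d t) := fun A hA =>
  let ⟨A', hA', hAA'⟩ := hAug t ht A hA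
  ⟨A', rawSA_mono (le_min le_rfl ht.2) _ hA', hAA'⟩

theorem statement3_general {T : ℝ} {d : ℕ}
    {m0 : MeasurableSpace (PathSpace d)}
    (𝔓 : Set (@Measure (PathSpace d) m0))
    (hB : rawSA d T ≤ m0)
    (hN : MeasurableSpace.generateFrom {N | IsPolar 𝔓 N} ≤ m0)
    (P : @Measure (PathSpace d) m0)
    (hAug : AugHyp T d 𝔓 P)
    (τ : PathSpace d → ℝ) (hτ : IsStoppingTime (FhatFilt T d 𝔓 hB hN) (fun ω => (τ ω : WithTop ℝ)))
    (hτcnt : (Set.range τ).Countable) (hτmem : ∀ ω, τ ω ∈ Set.Icc (0 : ℝ) T) :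
    -- (a) existence of an `F°`-stopping time agreeing with `τ` `P`-a.s.
    (∃ τo : PathSpace d → ℝ, IsStoppingTime (rawFilt T d) (fun ω => (τo ω : WithTop ℝ)) ∧
      (∀ ω, τo ω ∈ Set.Icc (0 : ℝ) T) ∧ P {ω | τ ω ≠ τo ω} = 0) ∧
    -- (b) for any such `τo`, the σ-algebras `F̂_τ` and `F°_{τo}` differ only by `P`-null sets
    (∀ τo : PathSpace d → ℝ, ∀ hτo : IsStoppingTime (rawFilt T d) (fun ω => (τo ω : WithTop ℝ)),
      P {ω | τ ω ≠ τo ω} = 0 →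
      (∀ A : Set (PathSpace d), MeasurableSet[hτ.measurableSpace] A →
        ∃ Ao : Set (PathSpace d), MeasurableSet[hτo.measurableSpace] Ao ∧
          P (symmDiff A Ao) = 0) ∧
      (∀ Λ : Set (PathSpace d), MeasurableSet[hτo.measurableSpace] Λ →
        ∃ Λ' : Set (PathSpace d), MeasurableSet[hτ.measurableSpace] Λ' ∧
          P (symmDiff Λ Λ') = 0)) := by
  have haug : ∀ t ∈ range τ, LEUpToNull P (FhatFilt T d 𝔓 hB hN t) (rawFilt T d t) := by
    rintro _ ⟨ω, rfl⟩
    exact hAug.leUpToNull (hτmem ω)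
  refine ⟨?_, fun τo hτo hne => ?_⟩
  · obtain ⟨τo, hτo, hτo_mem, hae⟩ :=
      exists_isStoppingTime_ae_eq_of_countable_range hτ hτcnt haug fun ω => (hτmem ω).2
    refine ⟨τo, hτo, fun ω => ?_, ae_iff.1 hae⟩
    rcases hτo_mem ω with h | ⟨ω', h⟩
    · rw [h]
      exact ⟨(hτmem ω).1.trans (hτmem ω).2, le_rfl⟩
    · exact h ▸ hτmem ω'
  · have hae : ∀ᵐ ω ∂P, τ ω = τo ω := ae_iff.2 hne
    exact ⟨hτ.leUpToNull_measurableSpace hτcnt hτo (ae_of_all _ mem_range_self) hae haug,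
      hτo.leUpToNull_measurableSpace hτcnt hτ (hae.mono fun ω h => h ▸ mem_range_self ω)
        (hae.mono fun _ h => h.symm) fun t _ => LEUpToNull.of_le (rawFilt_le_FhatFilt t)⟩

/-- countably-valued `F̂`-stopping times agree `P`-a.s. with `F°`-stopping
times, and the corresponding stopping σ-algebras differ only by `P`-null sets. -/
theorem statement3 {T : ℝ} (hT : 0 < T) {d : ℕ}
    {m0 : MeasurableSpace (PathSpace d)}
    (𝔓 : Set (@Measure (PathSpace d) m0)) (h𝔓 : 𝔓.Nonempty)
    (hprob : ∀ P ∈ 𝔓, IsProbabilityMeasure P)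
    (hB : rawSA d T ≤ m0)
    (hN : MeasurableSpace.generateFrom {N | IsPolar 𝔓 N} ≤ m0)
    (P : @Measure (PathSpace d) m0) (hPprob : IsProbabilityMeasure P)
    (hAug : AugHyp T d 𝔓 P)
    (τ : PathSpace d → ℝ) (hτ : IsStoppingTime (FhatFilt T d 𝔓 hB hN) (fun ω => (τ ω : WithTop ℝ)))
    (hτcnt : (Set.range τ).Countable) (hτmem : ∀ ω, τ ω ∈ Set.Icc (0 : ℝ) T) :
    -- (a) existence of an `F°`-stopping time agreeing with `τ` `P`-a.s.
    (∃ τo : PathSpace d → ℝ, IsStoppingTime (rawFilt T d) (fun ω => (τo ω : WithTop ℝ)) ∧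
      (∀ ω, τo ω ∈ Set.Icc (0 : ℝ) T) ∧ P {ω | τ ω ≠ τo ω} = 0) ∧
    -- (b) for any such `τo`, the σ-algebras `F̂_τ` and `F°_{τo}` differ only by `P`-null sets
    (∀ τo : PathSpace d → ℝ, ∀ hτo : IsStoppingTime (rawFilt T d) (fun ω => (τo ω : WithTop ℝ)),
      P {ω | τ ω ≠ τo ω} = 0 →
      (∀ A : Set (PathSpace d), MeasurableSet[hτ.measurableSpace] A →
        ∃ Ao : Set (PathSpace d), MeasurableSet[hτo.measurableSpace] Ao ∧
          P (symmDiff A Ao) = 0) ∧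
      (∀ Λ : Set (PathSpace d), MeasurableSet[hτo.measurableSpace] Λ →
        ∃ Λ' : Set (PathSpace d), MeasurableSet[hτ.measurableSpace] Λ' ∧
          P (symmDiff Λ Λ') = 0)) :=
  statement3_general 𝔓 hB hN P hAug τ hτ hτcnt hτmem
end

section
/- Let τ be an F̂-stopping time. Then: (a) there exists an F⁺-stopping time τ⁺ such that the set {τ ≠ τ⁺} is 𝒫-polar; (b) for every F⁺-stopping time τ⁺ with {τ ≠ τ⁺} 𝒫-polar, the σ-algebras F̂_τ and F⁺_{τ⁺} differ only by 𝒫-polar sets, i.e., for every A ∈ F̂_τ there exists A⁺ ∈ F⁺_{τ⁺} with A △ A⁺ 𝒫-polar, and for every Λ ∈ F⁺_{τ⁺} there exists Λ' ∈ F̂_τ with Λ △ Λ' 𝒫-polar. -/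
/-!
For every rational `q`, the set `{τ ≤ q} ∈ F̂_q` differs from some `B_q ∈ F⁺_q` by a polar set.
The rational debut `σ ω = inf {q : ω ∈ B_q}` is an `F⁺`-stopping time because `F⁺` is
right-continuous, and `σ = τ` outside the countable (hence polar) union of the discrepancies.

For (b), an `A ∈ F̂_τ` is recovered from the stopping time `τ_A`, equal to `τ` on `A` and to `T + 1`
off `A`: if `σ_A` is an `F⁺`-version of `τ_A`, then `A` agrees with `{τ⁺ = σ_A} ∈ F⁺_{τ⁺}` up to a
polar set. Conversely `F⁺_{τ⁺} ⊆ F̂_τ` on the nose, since `F̂` contains every polar set and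
`{τ ≤ t}`, `{τ⁺ ≤ t}` differ by one.
-/

open MeasureTheory Set Filter

/-- The filtration `F⁺` as a filtration with ambient σ-algebra `F°_T`. -/
def FplusFilt (T : ℝ) (d : ℕ) : Filtration ℝ (rawSA d T) where
  seq t := FplusSA T d t
  mono' := FplusSA_mono T d
  le' := FplusSA_le T d

open scoped symmDiff

section Polar

variable {α : Type*} {m0 : MeasurableSpace α} {𝔓 : Set (@Measure α m0)}

lemma IsPolar.mono {N M : Set α} (hM : IsPolar 𝔓 M) (h : N ⊆ M) : IsPolar 𝔓 N :=
  fun P hP => measure_mono_null h (hM P hP)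

lemma isPolar_empty : IsPolar 𝔓 (∅ : Set α) :=
  fun _ _ => measure_empty

lemma IsPolar.union {N M : Set α} (hN : IsPolar 𝔓 N) (hM : IsPolar 𝔓 M) : IsPolar 𝔓 (N ∪ M) :=
  fun P hP => measure_union_null (hN P hP) (hM P hP)

lemma isPolar_iUnion {ι : Sort*} [Countable ι] {N : ι → Set α} (h : ∀ i, IsPolar 𝔓 (N i)) :
    IsPolar 𝔓 (⋃ i, N i) :=
  fun P hP => measure_iUnion_null fun i => h i P hP

lemma exists_measurableSet_isPolar_symmDiff (G : MeasurableSpace α) {A : Set α}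
    (hA : MeasurableSet[G ⊔ MeasurableSpace.generateFrom {N | IsPolar 𝔓 N}] A) :
    ∃ A', MeasurableSet[G] A' ∧ IsPolar 𝔓 (A ∆ A') := by
  let polarClose : MeasurableSpace α :=
    { MeasurableSet' := fun A => ∃ A', MeasurableSet[G] A' ∧ IsPolar 𝔓 (A ∆ A')
      measurableSet_empty := ⟨∅, .empty, by simpa using isPolar_empty⟩
      measurableSet_compl := fun _ ⟨A', hA', hpol⟩ =>
        ⟨A'ᶜ, hA'.compl, by rwa [compl_symmDiff_compl]⟩
      measurableSet_iUnion := fun _ hA => by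
        choose A' hA' hpol using hA
        exact ⟨⋃ i, A' i, .iUnion hA', (isPolar_iUnion hpol).mono iSup_symmDiff_iSup_le⟩ }
  have hle : G ⊔ MeasurableSpace.generateFrom {N | IsPolar 𝔓 N} ≤ polarClose :=
    sup_le (fun A hA => ⟨A, hA, by simpa using isPolar_empty⟩) <|
      MeasurableSpace.generateFrom_le fun N hN =>
        ⟨∅, @MeasurableSet.empty _ G, by rwa [← Set.bot_eq_empty, symmDiff_bot]⟩
  exact hle A hA

lemma MeasurableSet.of_isPolar_symmDiff {G : MeasurableSpace α}
    (hG : MeasurableSpace.generateFrom {N | IsPolar 𝔓 N} ≤ G) {A A' : Set α}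
    (hA : MeasurableSet[G] A) (h : IsPolar 𝔓 (A ∆ A')) : MeasurableSet[G] A' := by
  rw [← symmDiff_symmDiff_cancel_left A A']
  exact hA.symmDiff (hG _ (MeasurableSpace.measurableSet_generateFrom h))

end Polar

section RatDebut

variable {Ω : Type*}

lemma sInf_image_ratCast_setOf_le (x : ℝ) : sInf ((↑) '' {q : ℚ | x ≤ q} : Set ℝ) = x := by
  have hbdd : BddBelow ((↑) '' {q : ℚ | x ≤ q} : Set ℝ) := ⟨x, by rintro _ ⟨q, hq, rfl⟩; exact hq⟩
  refine le_antisymm (le_of_forall_pos_le_add fun ε hε => ?_) ?_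
  · obtain ⟨q, hxq, hqε⟩ := exists_rat_btwn (lt_add_of_pos_right x hε)
    exact (csInf_le hbdd ⟨q, hxq.le, rfl⟩).trans hqε.le
  · obtain ⟨q, hq⟩ := exists_rat_gt x
    exact le_csInf ⟨q, q, hq.le, rfl⟩ (by rintro _ ⟨q, hq, rfl⟩; exact hq)

noncomputable def ratDebut (B : ℚ → Set Ω) (ω : Ω) : ℝ :=
  sInf ((↑) '' {q : ℚ | ω ∈ B q})

lemma ratDebut_eq_of_forall_mem_iff {B : ℚ → Set Ω} {ω : Ω} {x : ℝ}
    (h : ∀ q : ℚ, ω ∈ B q ↔ x ≤ q) : ratDebut B ω = x := by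
  simp only [ratDebut, h, sInf_image_ratCast_setOf_le]

variable {a b : ℝ} {B : ℚ → Set Ω}

lemma bddBelow_image_ratCast_setOf_mem (hBa : ∀ q : ℚ, (q : ℝ) < a → B q = ∅) (ω : Ω) :
    BddBelow ((↑) '' {q : ℚ | ω ∈ B q} : Set ℝ) := by
  refine ⟨a, ?_⟩
  rintro _ ⟨q, hq, rfl⟩
  by_contra! hqa
  simp [hBa q hqa] at hq

lemma ratDebut_lt_iff (hBa : ∀ q : ℚ, (q : ℝ) < a → B q = ∅)
    (hBb : ∀ q : ℚ, b ≤ q → B q = univ) (ω : Ω) (t : ℝ) :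
    ratDebut B ω < t ↔ ∃ q : ℚ, (q : ℝ) < t ∧ ω ∈ B q := by
  obtain ⟨q, hq⟩ := exists_rat_gt b
  have hne : ((↑) '' {q : ℚ | ω ∈ B q} : Set ℝ).Nonempty := ⟨q, q, by simp [hBb q hq.le], rfl⟩
  rw [ratDebut, csInf_lt_iff (bddBelow_image_ratCast_setOf_mem hBa ω) hne]
  constructor
  · rintro ⟨_, ⟨q, hq, rfl⟩, hqt⟩
    exact ⟨q, hqt, hq⟩
  · rintro ⟨q, hqt, hq⟩
    exact ⟨q, ⟨q, hq, rfl⟩, hqt⟩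

lemma ratDebut_mem_Icc (hBa : ∀ q : ℚ, (q : ℝ) < a → B q = ∅)
    (hBb : ∀ q : ℚ, b ≤ q → B q = univ) (ω : Ω) : ratDebut B ω ∈ Icc a b := by
  constructor
  · by_contra! h
    obtain ⟨q, hqa, hq⟩ := (ratDebut_lt_iff hBa hBb ω a).mp h
    simp [hBa q hqa] at hq
  · refine le_of_forall_gt fun t hbt => (ratDebut_lt_iff hBa hBb ω t).mpr ?_
    obtain ⟨q, hbq, hqt⟩ := exists_rat_btwn hbt
    exact ⟨q, hqt, by simp [hBb q hbq.le]⟩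

lemma isStoppingTime_ratDebut {m : MeasurableSpace Ω} {𝓕 : Filtration ℝ m}
    [𝓕.IsRightContinuous] (hB : ∀ q : ℚ, MeasurableSet[𝓕 q] (B q))
    (hBa : ∀ q : ℚ, (q : ℝ) < a → B q = ∅) (hBb : ∀ q : ℚ, b ≤ q → B q = univ) :
    IsStoppingTime 𝓕 (fun ω => (ratDebut B ω : WithTop ℝ)) := by
  refine isStoppingTime_of_measurableSet_lt_of_isRightContinuous fun t => ?_
  have hlt : {ω | (ratDebut B ω : WithTop ℝ) < t} = ⋃ (q : ℚ) (_ : (q : ℝ) < t), B q := by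
    ext ω
    simp [ratDebut_lt_iff hBa hBb]
  rw [hlt]
  exact .iUnion fun q => .iUnion fun hqt => 𝓕.mono hqt.le _ (hB q)

end RatDebut

lemma MeasureTheory.IsStoppingTime.piecewise_const {Ω ι : Type*} [LinearOrder ι]
    {m : MeasurableSpace Ω} {f : Filtration ι m} {τ : Ω → ι}
    (hτ : IsStoppingTime f (fun ω => (τ ω : WithTop ι))) {A : Set Ω} [DecidablePred (· ∈ A)]
    (hA : MeasurableSet[hτ.measurableSpace] A) {c : ι} (hτc : ∀ ω, τ ω ≤ c) :
    IsStoppingTime f (fun ω => (A.piecewise τ (fun _ => c) ω : WithTop ι)) := by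
  intro t
  by_cases hct : c ≤ t
  · convert @MeasurableSet.univ _ (f t)
    refine eq_univ_of_forall fun ω => WithTop.coe_le_coe.mpr ?_
    by_cases hω : ω ∈ A <;> simp [hω, (hτc ω).trans hct, hct]
  · convert hA.2 t using 1
    ext ω
    by_cases hω : ω ∈ A <;> simp [hω, not_le.mp hct]

section Augmentation

variable {Ω : Type*} {m m' mP : MeasurableSpace Ω} {𝔓 : Set (@Measure Ω mP)}
  {𝓕 : Filtration ℝ m} {𝓖 : Filtration ℝ m'}

lemma exists_measurableSet_isPolar_symmDiff_setOf_le
    (h𝓖 : ∀ t, 𝓖 t ≤ 𝓕 t ⊔ MeasurableSpace.generateFrom {N | IsPolar 𝔓 N})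
    {τ : Ω → ℝ} (hτ : IsStoppingTime 𝓖 (fun ω => (τ ω : WithTop ℝ))) {a b : ℝ}
    (hτab : ∀ ω, τ ω ∈ Icc a b) (t : ℝ) :
    ∃ B, MeasurableSet[𝓕 t] B ∧ IsPolar 𝔓 ({ω | τ ω ≤ t} ∆ B) ∧
      (t < a → B = ∅) ∧ (b ≤ t → B = univ) := by
  rcases lt_or_ge t a with hta | hat
  · have hempty : {ω | τ ω ≤ t} = ∅ :=
      eq_empty_of_forall_notMem fun ω hω => (hta.trans_le (hτab ω).1).not_ge hω
    refine ⟨∅, @MeasurableSet.empty _ (𝓕 t), by simpa [hempty] using isPolar_empty,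
      fun _ => rfl, fun hbt => ?_⟩
    rw [← hempty]
    exact eq_univ_of_forall fun ω => (hτab ω).2.trans hbt
  rcases le_or_gt b t with hbt | htb
  · have huniv : {ω | τ ω ≤ t} = univ := eq_univ_of_forall fun ω => (hτab ω).2.trans hbt
    exact ⟨univ, @MeasurableSet.univ _ (𝓕 t), by simpa [huniv] using isPolar_empty,
      fun hta => absurd hta hat.not_gt, fun _ => rfl⟩
  obtain ⟨B, hBmeas, hBpol⟩ := exists_measurableSet_isPolar_symmDiff (𝓕 t)
    (h𝓖 t {ω | τ ω ≤ t} (by simpa only [WithTop.coe_le_coe] using hτ t))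
  exact ⟨B, hBmeas, hBpol, fun hta => absurd hta hat.not_gt, fun hbt => absurd hbt htb.not_ge⟩

lemma exists_isStoppingTime_isPolar_ne [𝓕.IsRightContinuous]
    (h𝓖 : ∀ t, 𝓖 t ≤ 𝓕 t ⊔ MeasurableSpace.generateFrom {N | IsPolar 𝔓 N})
    {τ : Ω → ℝ} (hτ : IsStoppingTime 𝓖 (fun ω => (τ ω : WithTop ℝ))) {a b : ℝ}
    (hτab : ∀ ω, τ ω ∈ Icc a b) :
    ∃ σ : Ω → ℝ, IsStoppingTime 𝓕 (fun ω => (σ ω : WithTop ℝ)) ∧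
      (∀ ω, σ ω ∈ Icc a b) ∧ IsPolar 𝔓 {ω | τ ω ≠ σ ω} := by
  choose B hBmeas hBpol hBa hBb using
    fun q : ℚ => exists_measurableSet_isPolar_symmDiff_setOf_le h𝓖 hτ hτab q
  refine ⟨ratDebut B, isStoppingTime_ratDebut hBmeas hBa hBb, ratDebut_mem_Icc hBa hBb,
    (isPolar_iUnion hBpol).mono fun ω hω => ?_⟩
  by_contra hω'
  refine hω (ratDebut_eq_of_forall_mem_iff fun q => ?_).symm
  have : ω ∉ {ω | τ ω ≤ q} ∆ B q := fun h => hω' (mem_iUnion.mpr ⟨q, h⟩)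
  simp only [mem_symmDiff, mem_ofPred_eq] at this
  tauto

lemma exists_measurableSet_isPolar_symmDiff_of_isPolar_ne [𝓕.IsRightContinuous]
    (h𝓖 : ∀ t, 𝓖 t ≤ 𝓕 t ⊔ MeasurableSpace.generateFrom {N | IsPolar 𝔓 N})
    {τ : Ω → ℝ} (hτ : IsStoppingTime 𝓖 (fun ω => (τ ω : WithTop ℝ))) {a b : ℝ}
    (hτab : ∀ ω, τ ω ∈ Icc a b) {τ' : Ω → ℝ}
    (hτ' : IsStoppingTime 𝓕 (fun ω => (τ' ω : WithTop ℝ))) (hττ' : IsPolar 𝔓 {ω | τ ω ≠ τ' ω})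
    {A : Set Ω} (hA : MeasurableSet[hτ.measurableSpace] A) :
    ∃ A', MeasurableSet[hτ'.measurableSpace] A' ∧ IsPolar 𝔓 (A ∆ A') := by
  classical
  have hτb : ∀ ω, τ ω ≤ b + 1 := fun ω => (hτab ω).2.trans (by linarith)
  obtain ⟨σ, hσ, -, hσpol⟩ := exists_isStoppingTime_isPolar_ne h𝓖
    (hτ.piecewise_const hA hτb) (a := a) (b := b + 1) fun ω => by
      by_cases hω : ω ∈ A <;> simp [hω, (hτab ω).1, hτb ω, (hτab ω).1.trans (hτb ω)]
  refine ⟨{ω | τ' ω = σ ω}, by simpa only [WithTop.coe_inj] using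
    hτ'.measurableSet_eq_stopping_time hσ, (hττ'.union hσpol).mono fun ω hω => ?_⟩
  by_contra h
  simp only [mem_union, mem_ofPred_eq, not_or, not_not] at h
  by_cases hωA : ω ∈ A
  · rw [piecewise_eq_of_mem _ _ _ hωA] at h
    simp only [mem_symmDiff, hωA, mem_ofPred_eq, true_and, not_true_eq_false, and_false,
      or_false] at hω
    exact hω (h.1.symm.trans h.2)
  · rw [piecewise_eq_of_notMem _ _ _ hωA] at h
    simp only [mem_symmDiff, hωA, mem_ofPred_eq, false_and, false_or] at hω
    linarith [(hτab ω).2, h.1, h.2, hω.1]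

lemma MeasureTheory.IsStoppingTime.measurableSpace_le_of_isPolar_ne
    (h𝓖 : ∀ t, 𝓕 t ⊔ MeasurableSpace.generateFrom {N | IsPolar 𝔓 N} ≤ 𝓖 t)
    {τ τ' : Ω → ℝ} (hτ : IsStoppingTime 𝓖 (fun ω => (τ ω : WithTop ℝ)))
    (hτ' : IsStoppingTime 𝓕 (fun ω => (τ' ω : WithTop ℝ))) (hττ' : IsPolar 𝔓 {ω | τ ω ≠ τ' ω}) :
    hτ'.measurableSpace ≤ hτ.measurableSpace := by
  intro Λ hΛ
  refine ⟨iSup_mono (fun t => le_sup_left.trans (h𝓖 t)) _ hΛ.1, fun t => ?_⟩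
  refine MeasurableSet.of_isPolar_symmDiff (le_sup_right.trans (h𝓖 t))
    (le_sup_left.trans (h𝓖 t) _ (hΛ.2 t)) (hττ'.mono ?_)
  rintro ω hω heq
  simp only [mem_symmDiff, mem_inter_iff, mem_ofPred_eq, heq] at hω
  tauto

end Augmentation

open Filtration in
lemma FplusFilt_eq_rightCont (T : ℝ) (d : ℕ) : FplusFilt T d = (rawFilt T d)₊ := by
  refine Filtration.ext (funext fun t => ?_)
  rw [rightCont_eq]
  rfl

instance (T : ℝ) (d : ℕ) : (FplusFilt T d).IsRightContinuous :=
  FplusFilt_eq_rightCont T d ▸ inferInstance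

theorem statement4_general {T : ℝ} {d : ℕ}
    {m0 : MeasurableSpace (PathSpace d)}
    (𝔓 : Set (@Measure (PathSpace d) m0))
    (hB : rawSA d T ≤ m0)
    (hN : MeasurableSpace.generateFrom {N | IsPolar 𝔓 N} ≤ m0)
    (τ : PathSpace d → ℝ) (hτ : IsStoppingTime (FhatFilt T d 𝔓 hB hN) (fun ω => (τ ω : WithTop ℝ)))
    (hτmem : ∀ ω, τ ω ∈ Set.Icc (0 : ℝ) T) :
    -- (a) existence of an `F⁺`-stopping time agreeing with `τ` up to a polar set
    (∃ τp : PathSpace d → ℝ, IsStoppingTime (FplusFilt T d) (fun ω => (τp ω : WithTop ℝ)) ∧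
      (∀ ω, τp ω ∈ Set.Icc (0 : ℝ) T) ∧ IsPolar 𝔓 {ω | τ ω ≠ τp ω}) ∧
    -- (b) for any such `τ⁺`, `F̂_τ` and `F⁺_{τ⁺}` differ only by polar sets
    (∀ τp : PathSpace d → ℝ, ∀ hτp : IsStoppingTime (FplusFilt T d) (fun ω => (τp ω : WithTop ℝ)),
      IsPolar 𝔓 {ω | τ ω ≠ τp ω} →
      (∀ A : Set (PathSpace d), MeasurableSet[hτ.measurableSpace] A →
        ∃ Ap : Set (PathSpace d), MeasurableSet[hτp.measurableSpace] Ap ∧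
          IsPolar 𝔓 (symmDiff A Ap)) ∧
      (∀ Λ : Set (PathSpace d), MeasurableSet[hτp.measurableSpace] Λ →
        ∃ Λ' : Set (PathSpace d), MeasurableSet[hτ.measurableSpace] Λ' ∧
          IsPolar 𝔓 (symmDiff Λ Λ'))) := by
  have hFhat : ∀ t, FhatFilt T d 𝔓 hB hN t =
      FplusFilt T d t ⊔ MeasurableSpace.generateFrom {N | IsPolar 𝔓 N} := fun _ => rfl
  refine ⟨exists_isStoppingTime_isPolar_ne (fun t => (hFhat t).le) hτ hτmem,
    fun τp hτp hττp => ⟨fun A hA => ?_, fun Λ hΛ => ⟨Λ, ?_, by simpa using isPolar_empty⟩⟩⟩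
  · exact exists_measurableSet_isPolar_symmDiff_of_isPolar_ne (fun t => (hFhat t).le) hτ hτmem
      hτp hττp hA
  · exact hτ.measurableSpace_le_of_isPolar_ne (fun t => (hFhat t).ge) hτp hττp _ hΛ

/-- any `F̂`-stopping time agrees with an `F⁺`-stopping time up to a
`𝔓`-polar set, and the corresponding stopping σ-algebras differ only by `𝔓`-polar sets. -/
theorem statement4 {T : ℝ} (hT : 0 < T) {d : ℕ}
    {m0 : MeasurableSpace (PathSpace d)}
    (𝔓 : Set (@Measure (PathSpace d) m0)) (h𝔓 : 𝔓.Nonempty)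
    (hprob : ∀ P ∈ 𝔓, IsProbabilityMeasure P)
    (hB : rawSA d T ≤ m0)
    (hN : MeasurableSpace.generateFrom {N | IsPolar 𝔓 N} ≤ m0)
    (τ : PathSpace d → ℝ) (hτ : IsStoppingTime (FhatFilt T d 𝔓 hB hN) (fun ω => (τ ω : WithTop ℝ)))
    (hτmem : ∀ ω, τ ω ∈ Set.Icc (0 : ℝ) T) :
    -- (a) existence of an `F⁺`-stopping time agreeing with `τ` up to a polar set
    (∃ τp : PathSpace d → ℝ, IsStoppingTime (FplusFilt T d) (fun ω => (τp ω : WithTop ℝ)) ∧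
      (∀ ω, τp ω ∈ Set.Icc (0 : ℝ) T) ∧ IsPolar 𝔓 {ω | τ ω ≠ τp ω}) ∧
    -- (b) for any such `τ⁺`, `F̂_τ` and `F⁺_{τ⁺}` differ only by polar sets
    (∀ τp : PathSpace d → ℝ, ∀ hτp : IsStoppingTime (FplusFilt T d) (fun ω => (τp ω : WithTop ℝ)),
      IsPolar 𝔓 {ω | τ ω ≠ τp ω} →
      (∀ A : Set (PathSpace d), MeasurableSet[hτ.measurableSpace] A →
        ∃ Ap : Set (PathSpace d), MeasurableSet[hτp.measurableSpace] Ap ∧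
          IsPolar 𝔓 (symmDiff A Ap)) ∧
      (∀ Λ : Set (PathSpace d), MeasurableSet[hτp.measurableSpace] Λ →
        ∃ Λ' : Set (PathSpace d), MeasurableSet[hτ.measurableSpace] Λ' ∧
          IsPolar 𝔓 (symmDiff Λ Λ'))) :=
  statement4_general 𝔓 hB hN τ hτ hτmem
end
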